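/- arXiv:2401.10866 — 8 statements merged into one kernel-verified Lean document; each statement's English description precedes it below -/
import Mathlib

section
/- Let d ≥ 2 and let g be a monic copositive polynomial of degree d. Define t = inf { g(x)/x : x > 0 }. Then there exists y ≥ 0 such that g(y) − t·y = 0 and g'(y) − t = 0. -/
/-!
Let `t = inf_{x > 0} g(x)/x`, so that `g - t X` is copositive; it suffices to find `y ≥ 0`
where the infimum is attained, possibly in the limit `x → 0⁺`. If `g(0) > 0`, then
`g(x)/x → ∞` both as `x → 0⁺` and, since `deg g ≥ 2`, as `x → ∞`; so the infimum is a minimum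
at some `y > 0`, which is then an interior minimum, with value `0`, of `g - t X`.
If `g(0) = 0`, then `g = X p` with `p` of positive degree, `g(x)/x = p(x)` on `x > 0`, and the
infimum is `p(y)` for a minimiser `y` of `p` on `[0, ∞)`; as `g' = p + X p'`, tangency at `y`
follows from `y p'(y) = 0`.
-/

open Polynomial Filter Topology Set

theorem exists_isMinOn_Ioi_of_tendsto_atTop {α : Type*} [LinearOrder α] [TopologicalSpace α]
    [ClosedIicTopology α] {f : ℝ → α} (hf : ContinuousOn f (Ioi 0))
    (hzero : Tendsto f (𝓝[>] 0) atTop) (htop : Tendsto f atTop atTop) :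
    ∃ y ∈ Ioi (0 : ℝ), IsMinOn f (Ioi 0) y := by
  -- `exp` identifies `ℝ` with `Ioi 0`, carrying `cocompact ℝ = atBot ⊔ atTop` to `𝓝[>] 0 ⊔ atTop`.
  have hcont : Continuous (f ∘ Real.exp) :=
    hf.comp_continuous Real.continuous_exp Real.exp_pos
  have hlim : Tendsto (f ∘ Real.exp) (cocompact ℝ) atTop := by
    rw [cocompact_eq_atBot_atTop]
    exact (hzero.comp Real.tendsto_exp_atBot_nhdsGT).sup (htop.comp Real.tendsto_exp_atTop)
  obtain ⟨s, hs⟩ := hcont.exists_forall_le hlim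
  refine ⟨Real.exp s, Real.exp_pos s, fun x hx => ?_⟩
  simpa [Real.exp_log (mem_Ioi.mp hx)] using hs (Real.log x)

theorem exists_isMinOn_Ici_of_tendsto_atTop {α : Type*} [LinearOrder α] [TopologicalSpace α]
    [ClosedIicTopology α] {f : ℝ → α} {a : ℝ} (hf : ContinuousOn f (Ici a))
    (htop : Tendsto f atTop atTop) : ∃ y ∈ Ici a, IsMinOn f (Ici a) y := by
  obtain ⟨M, hM⟩ := eventually_atTop.mp (htop.eventually_ge_atTop (f a))
  refine hf.exists_isMinOn' isClosed_Ici self_mem_Ici <| mem_inf_of_inter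
    (isCompact_Icc (a := a) (b := M)).compl_mem_cocompact (mem_principal_self _) ?_
  rintro x ⟨hxK, hxa⟩
  simp only [mem_compl_iff, mem_Icc, not_and, not_le] at hxK
  exact hM x (hxK hxa).le

theorem csInf_image_Ioi_eq_of_isMinOn_Ici {f : ℝ → ℝ} {a y : ℝ} (hf : ContinuousOn f (Ici a))
    (hy : y ∈ Ici a) (hmin : IsMinOn f (Ici a) y) : sInf (f '' Ioi a) = f y := by
  have hlower : f y ∈ lowerBounds (f '' Ioi a) :=
    forall_mem_image.mpr fun x hx => hmin (mem_Ici_of_Ioi hx)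
  have hclosure : f y ∈ closure (f '' Ioi a) := by
    rw [← closure_Ioi] at hf hy
    exact hf.image_closure (mem_image_of_mem f hy)
  exact (isGLB_of_mem_closure hlower hclosure).csInf_eq (nonempty_Ioi.image f)

namespace Polynomial

theorem eval_derivative_eq_zero_of_isMinOn {p : ℝ[X]} {s : Set ℝ} {y : ℝ}
    (hmin : IsMinOn (fun x => p.eval x) s y) (hs : s ∈ 𝓝 y) : (derivative p).eval y = 0 := by
  simpa only [Polynomial.deriv] using (hmin.isLocalMin hs).deriv_eq_zero

theorem tendsto_eval_div_self_nhdsGT_zero {g : ℝ[X]} (hg : 0 < g.eval 0) :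
    Tendsto (fun x => g.eval x / x) (𝓝[>] 0) atTop := by
  simpa only [div_eq_mul_inv] using
    ((g.continuous.tendsto 0).mono_left nhdsWithin_le_nhds).pos_mul_atTop hg tendsto_inv_nhdsGT_zero

theorem tendsto_eval_div_self_atTop {g : ℝ[X]} (hdeg : 1 < g.degree) (hlead : 0 ≤ g.leadingCoeff) :
    Tendsto (fun x => g.eval x / x) atTop atTop := by
  simpa using
    div_tendsto_atTop_of_degree_gt g X (by simpa using hdeg) X_ne_zero (by simpa using hlead)

/-- The paper's `t`: the largest slope of a line through the origin staying below `g` on `x > 0`. -/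
noncomputable def infEvalDivSelf (g : ℝ[X]) : ℝ :=
  sInf ((fun x => g.eval x / x) '' Ioi 0)

theorem eval_eq_and_eval_derivative_eq_of_isMinOn {g : ℝ[X]} {y : ℝ} (hy : 0 < y)
    (hmin : IsMinOn (fun x => g.eval x / x) (Ioi 0) y) :
    g.eval y = g.infEvalDivSelf * y ∧ (derivative g).eval y = g.infEvalDivSelf := by
  have hinf : g.infEvalDivSelf = g.eval y / y :=
    IsLeast.csInf_eq ⟨mem_image_of_mem _ hy, forall_mem_image.mpr fun x hx => hmin hx⟩
  set t := g.infEvalDivSelf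
  have hty : g.eval y = t * y := by rw [hinf, div_mul_cancel₀ _ hy.ne']
  have htangent : IsMinOn (fun x => (g - C t * X).eval x) (Ioi 0) y := fun x (hx : 0 < x) => by
    have : t * x ≤ g.eval x := (le_div_iff₀ hx).mp (hinf ▸ hmin hx)
    simp only [eval_sub, eval_mul, eval_C, eval_X, mem_ofPred_eq]
    linarith
  refine ⟨hty, ?_⟩
  simpa [sub_eq_zero] using eval_derivative_eq_zero_of_isMinOn htangent (Ioi_mem_nhds hy)

theorem exists_isMinOn_eval_div_self {g : ℝ[X]} (hdeg : 1 < g.degree) (hlead : 0 ≤ g.leadingCoeff)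
    (hg : 0 < g.eval 0) : ∃ y ∈ Ioi (0 : ℝ), IsMinOn (fun x => g.eval x / x) (Ioi 0) y :=
  exists_isMinOn_Ioi_of_tendsto_atTop
    (g.continuous.continuousOn.div continuousOn_id fun _ hx => ne_of_gt hx)
    (tendsto_eval_div_self_nhdsGT_zero hg) (tendsto_eval_div_self_atTop hdeg hlead)

theorem exists_eval_eq_and_eval_derivative_eq_X_mul {p : ℝ[X]} (hdeg : 0 < p.degree)
    (hlead : 0 ≤ p.leadingCoeff) :
    ∃ y, 0 ≤ y ∧ (X * p).eval y = (X * p).infEvalDivSelf * y ∧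
      (derivative (X * p)).eval y = (X * p).infEvalDivSelf := by
  obtain ⟨y, hy, hmin⟩ := exists_isMinOn_Ici_of_tendsto_atTop (a := 0)
    p.continuous.continuousOn (p.tendsto_atTop_of_leadingCoeff_nonneg hdeg hlead)
  have hinf : (X * p).infEvalDivSelf = p.eval y := by
    rw [infEvalDivSelf, ← csInf_image_Ioi_eq_of_isMinOn_Ici p.continuous.continuousOn hy hmin]
    refine congrArg sInf (image_congr fun x (hx : 0 < x) => ?_)
    rw [eval_mul, eval_X, mul_div_cancel_left₀ _ hx.ne']
  have hcrit : y * (derivative p).eval y = 0 := by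
    rcases (mem_Ici.mp hy).eq_or_lt with rfl | hpos
    · exact zero_mul _
    · rw [eval_derivative_eq_zero_of_isMinOn (hmin.on_subset Ioi_subset_Ici_self)
        (Ioi_mem_nhds hpos), mul_zero]
  refine ⟨y, hy, ?_, ?_⟩
  · rw [hinf, eval_mul, eval_X, mul_comm]
  · rw [hinf, derivative_mul, derivative_X, eval_add, eval_mul, eval_mul, eval_X, hcrit]
    simp

end Polynomial

theorem extension_surjective (d : ℕ) (hd : 2 ≤ d) (g : ℝ[X])
    (hmonic : g.Monic) (hdeg : g.natDegree = d)
    (hcop : ∀ x : ℝ, 0 ≤ x → 0 ≤ g.eval x)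
    (t : ℝ) (hT : t = sInf {y : ℝ | ∃ x : ℝ, 0 < x ∧ y = g.eval x / x}) :
    ∃ y : ℝ, 0 ≤ y ∧ g.eval y - t * y = 0 ∧ (Polynomial.derivative g).eval y - t = 0 := by
  have ht : t = g.infEvalDivSelf := by
    rw [hT, infEvalDivSelf]
    congr 1 with _
    simp [eq_comm]
  simp only [ht, sub_eq_zero]
  rcases (hcop 0 le_rfl).lt_or_eq with hg0 | hg0
  · have hdeg' : 1 < g.degree := by
      rw [degree_eq_natDegree hmonic.ne_zero, hdeg]
      exact_mod_cast hd
    obtain ⟨y, hy, hmin⟩ := exists_isMinOn_eval_div_self hdeg' (by simp [hmonic.leadingCoeff]) hg0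
    exact ⟨y, le_of_lt hy, eval_eq_and_eval_derivative_eq_of_isMinOn hy hmin⟩
  · obtain ⟨p, rfl⟩ : X ∣ g := X_dvd_iff.mpr (by rw [coeff_zero_eq_eval_zero, ← hg0])
    have hp : p.Monic := monic_X.of_mul_monic_left hmonic
    have hpdeg : 0 < p.degree := by
      rw [natDegree_X_mul hp.ne_zero] at hdeg
      rw [← natDegree_pos_iff_degree_pos]
      omega
    exact exists_eval_eq_and_eval_derivative_eq_X_mul hpdeg (by simp [hp.leadingCoeff])
end

section
/- Let d ≥ 2. Suppose f and g are monic copositive polynomials of degree d, each having a point y ≥ 0 where both the polynomial and its derivative vanish, and suppose t, s ≥ 0 satisfy f(x) + t·x = g(x) + s·x for all x. Then f = g and t = s. -/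
open Polynomial

lemma deriv_nonneg_at_zero (p : ℝ[X]) (h0 : p.eval 0 = 0)
    (hp : ∀ x : ℝ, 0 ≤ x → 0 ≤ p.eval x) : 0 ≤ (Polynomial.derivative p).eval 0 := by
  have hd : HasDerivAt (fun x => p.eval x) ((Polynomial.derivative p).eval 0) 0 :=
    p.hasDerivAt 0
  rw [hasDerivAt_iff_tendsto_slope] at hd
  have hd' : Filter.Tendsto (slope (fun x => p.eval x) 0) (nhdsWithin 0 (Set.Ioi 0))
      (nhds ((Polynomial.derivative p).eval 0)) :=
    hd.mono_left (nhdsWithin_mono 0 (fun x hx => ne_of_gt hx))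
  refine ge_of_tendsto hd' ?_
  filter_upwards [self_mem_nhdsWithin] with x hx
  have hx' : (0:ℝ) < x := hx
  rw [slope_def_field]
  simp only [h0, sub_zero]
  exact div_nonneg (hp x hx'.le) hx'.le

lemma extension_aux (f g : ℝ[X]) (hfc : ∀ x : ℝ, 0 ≤ x → 0 ≤ f.eval x)
    (hgb : ∃ y : ℝ, 0 ≤ y ∧ g.eval y = 0 ∧ (Polynomial.derivative g).eval y = 0)
    (c : ℝ) (hc : 0 < c) (h : g = f + C c * X) : False := by
  obtain ⟨y, hy, hgy, hgy'⟩ := hgb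
  have hev : f.eval y + c * y = 0 := by
    have := hgy
    rw [h] at this
    simpa using this
  have hfy : f.eval y = 0 ∧ c * y = 0 := by
    constructor <;> nlinarith [hfc y hy, mul_nonneg hc.le hy]
  have hy0 : y = 0 := by
    rcases mul_eq_zero.1 hfy.2 with h' | h'
    · exact absurd h' hc.ne'
    · exact h'
  have hder : (Polynomial.derivative f).eval y + c = 0 := by
    have := hgy'
    rw [h] at this
    simpa using this
  have h1 : 0 ≤ (Polynomial.derivative f).eval 0 :=
    deriv_nonneg_at_zero f (hy0 ▸ hfy.1) hfc
  rw [hy0] at hder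
  linarith

theorem extension_injective (d : ℕ) (hd : 2 ≤ d) (f g : ℝ[X])
    (hfm : f.Monic) (hfd : f.natDegree = d) (hfc : ∀ x : ℝ, 0 ≤ x → 0 ≤ f.eval x)
    (hgm : g.Monic) (hgd : g.natDegree = d) (hgc : ∀ x : ℝ, 0 ≤ x → 0 ≤ g.eval x)
    (hfb : ∃ y : ℝ, 0 ≤ y ∧ f.eval y = 0 ∧ (Polynomial.derivative f).eval y = 0)
    (hgb : ∃ y : ℝ, 0 ≤ y ∧ g.eval y = 0 ∧ (Polynomial.derivative g).eval y = 0)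
    (t s : ℝ) (ht : 0 ≤ t) (hs : 0 ≤ s)
    (heq : f + C t * X = g + C s * X) :
    f = g ∧ t = s := by
  have hts : t = s := by
    rcases lt_trichotomy t s with h | h | h
    · exact absurd (extension_aux g f hgc hfb (s - t) (by linarith) (by rw [C_sub]; linear_combination heq)) not_false
    · exact h
    · exact absurd (extension_aux f g hfc hgb (t - s) (by linarith) (by rw [C_sub]; linear_combination -heq)) not_false
  refine ⟨?_, hts⟩
  have := heq
  rw [hts] at this
  exact add_right_cancel this
end

section
/- For all t₀, t₁, t₂ ≥ 0, the cubic polynomial x³ + (t₀ − 2t₁)x² + (t₁² − 2t₀t₁ + t₂)x + t₀t₁², which equals (x − t₁)²(x + t₀) + t₂x, is copositive; conversely, every monic copositive cubic can be written in this form for some t₀, t₁, t₂ ≥ 0. -/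
open Polynomial

set_option maxHeartbeats 1000000

private lemma cubic_form (f : ℝ[X]) (hm : f.Monic) (h3 : f.natDegree = 3) :
    f = X ^ 3 + C (f.coeff 2) * X ^ 2 + C (f.coeff 1) * X + C (f.coeff 0) := by
  have hc3 : f.coeff 3 = 1 := by
    have := hm.coeff_natDegree
    rwa [h3] at this
  ext n
  match n with
  | 0 => simp
  | 1 => simp
  | 2 => simp
  | 3 => simp [hc3]
  | (n+4) =>
    have h : f.natDegree < n + 4 := by omega
    rw [f.coeff_eq_zero_of_natDegree_lt h]
    simp [coeff_X_pow, coeff_C]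

theorem param_C3 :
    (∀ t0 t1 t2 : ℝ, 0 ≤ t0 → 0 ≤ t1 → 0 ≤ t2 →
      (X ^ 3 + C (t0 - 2 * t1) * X ^ 2 + C (t1 ^ 2 - 2 * t0 * t1 + t2) * X + C (t0 * t1 ^ 2)
          = (X - C t1) ^ 2 * (X + C t0) + C t2 * X) ∧
      (∀ x : ℝ, 0 ≤ x →
        0 ≤ (X ^ 3 + C (t0 - 2 * t1) * X ^ 2 + C (t1 ^ 2 - 2 * t0 * t1 + t2) * X
              + C (t0 * t1 ^ 2) : ℝ[X]).eval x)) ∧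
    (∀ f : ℝ[X], f.Monic → f.natDegree = 3 → (∀ x : ℝ, 0 ≤ x → 0 ≤ f.eval x) →
      ∃ t0 t1 t2 : ℝ, 0 ≤ t0 ∧ 0 ≤ t1 ∧ 0 ≤ t2 ∧
        f = X ^ 3 + C (t0 - 2 * t1) * X ^ 2 + C (t1 ^ 2 - 2 * t0 * t1 + t2) * X
              + C (t0 * t1 ^ 2)) := by
  constructor
  · intro t0 t1 t2 h0 h1 h2
    constructor
    · simp only [map_sub, map_add, map_mul, map_pow, map_ofNat]
      ring
    · intro x hx
      simp only [eval_add, eval_mul, eval_pow, eval_C, eval_X]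
      nlinarith [sq_nonneg (x - t1), mul_nonneg h0 (sq_nonneg (x - t1)), mul_nonneg hx (sq_nonneg (x - t1)), mul_nonneg h2 hx]
  · intro f hm h3 hpos
    set b := f.coeff 2 with hb
    set c := f.coeff 1 with hc
    set d := f.coeff 0 with hd
    have hf : f = X ^ 3 + C b * X ^ 2 + C c * X + C d := cubic_form f hm h3
    have heval : ∀ x : ℝ, f.eval x = x ^ 3 + b * x ^ 2 + c * x + d := by
      intro x; rw [hf]; simp only [eval_add, eval_mul, eval_pow, eval_C, eval_X]
    have hd0 : 0 ≤ d := by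
      have := hpos 0 le_rfl
      rw [heval 0] at this; linarith
    -- find t1 in [m, T] with 2 t1^3 + b t1^2 = d
    set m : ℝ := max 0 (-b / 2) with hmdef
    set T : ℝ := max 1 (|b| + d) with hT
    have hm0 : 0 ≤ m := le_max_left _ _
    have hmb : -b / 2 ≤ m := le_max_right _ _
    have hT1 : (1:ℝ) ≤ T := le_max_left _ _
    have hTbd : |b| + d ≤ T := le_max_right _ _
    have hmT : m ≤ T := by
      rcases le_total 0 b with h | h
      · have : m = 0 := max_eq_left (by linarith)
        linarith
      · have habs : |b| = -b := abs_of_nonpos h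
        have : m ≤ -b := by
          rw [hmdef]; apply max_le; linarith; linarith
        linarith [abs_nonneg b]
    have hgm : 2 * m ^ 3 + b * m ^ 2 = 0 := by
      rcases le_total 0 b with h | h
      · have : m = 0 := max_eq_left (by linarith)
        rw [this]; ring
      · have : m = -b / 2 := by
          rw [hmdef]; apply max_eq_right; linarith
        rw [this]; ring
    have hgT : d ≤ 2 * T ^ 3 + b * T ^ 2 := by
      have hbT : |b| ≤ T := by linarith
      have h1 : -T ≤ b := by
        have := (abs_le.mp hbT).1; linarith
      have hd2 : d ≤ T := by have := abs_nonneg b; linarith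
      have hT3 : T ≤ T ^ 3 := by
        nlinarith [mul_nonneg (mul_nonneg (by linarith : (0:ℝ) ≤ T) (by linarith : (0:ℝ) ≤ T - 1)) (by linarith : (0:ℝ) ≤ T + 1)]
      have hbT2 : -T * T ^ 2 ≤ b * T ^ 2 := mul_le_mul_of_nonneg_right h1 (sq_nonneg T)
      nlinarith
    have hcont : ContinuousOn (fun t : ℝ => 2 * t ^ 3 + b * t ^ 2) (Set.Icc m T) := by
      fun_prop
    obtain ⟨t1, ht1mem, hg⟩ := intermediate_value_Icc hmT hcont ⟨by simpa [hgm] using hd0, by simpa using hgT⟩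
    obtain ⟨ht1m, ht1T⟩ := ht1mem
    have ht1 : 0 ≤ t1 := le_trans hm0 ht1m
    have ht0 : 0 ≤ b + 2 * t1 := by
      have : -b / 2 ≤ t1 := le_trans hmb ht1m
      linarith
    have hgd : 2 * t1 ^ 3 + b * t1 ^ 2 = d := hg
    -- key: 3 t1^2 + 2 b t1 + c ≥ 0
    have hkey : 0 ≤ 3 * t1 ^ 2 + 2 * b * t1 + c := by
      rcases eq_or_lt_of_le ht1 with h | h
      · -- t1 = 0, so d = 0; show c ≥ 0
        have ht10 : t1 = 0 := h.symm
        have hdz : d = 0 := by rw [ht10] at hgd; linarith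
        have hc0 : 0 ≤ c := by
          by_contra hcneg
          push_neg at hcneg
          set x : ℝ := min 1 (-c / (2 * (1 + |b|))) with hx
          have hb1 : (0:ℝ) < 1 + |b| := by positivity
          have hxpos : 0 < x := lt_min one_pos (div_pos (by linarith) (by positivity))
          have hx1 : x ≤ 1 := min_le_left _ _
          have hx2 : x ≤ -c / (2 * (1 + |b|)) := min_le_right _ _
          have hx3 : x * (1 + |b|) ≤ -c / 2 := by
            rw [le_div_iff₀ (by positivity)] at hx2
            nlinarith
          have hfx := hpos x hxpos.le
          rw [heval x, hdz] at hfx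
          have hbx : b * x ≤ |b| * x :=
            mul_le_mul_of_nonneg_right (le_abs_self b) hxpos.le
          have hq : x ^ 2 + b * x + c ≤ c / 2 := by nlinarith
          nlinarith
        rw [ht10]; nlinarith
      · -- t1 > 0: use f(t1) ≥ 0
        have hfx := hpos t1 ht1
        rw [heval t1] at hfx
        have : 0 ≤ t1 * (3 * t1 ^ 2 + 2 * b * t1 + c) := by nlinarith
        nlinarith [mul_pos h h]
    refine ⟨b + 2 * t1, t1, 3 * t1 ^ 2 + 2 * b * t1 + c, ht0, ht1, hkey, ?_⟩
    have e1 : b + 2 * t1 - 2 * t1 = b := by ring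
    have e2 : t1 ^ 2 - 2 * (b + 2 * t1) * t1 + (3 * t1 ^ 2 + 2 * b * t1 + c) = c := by ring
    have e3 : (b + 2 * t1) * t1 ^ 2 = d := by linarith
    rw [e1, e2, e3]
    exact hf
end

section
/- Define Φ_d : (ℝ_{≥0})^d → ℝ[x] recursively by Φ₀ = 1, Φ₁(t₀) = x + t₀, and Φ_d(t₀,…,t_{d−1}) = (x − t_{d−2})²·Φ_{d−2}(t₀,…,t_{d−3}) + t_{d−1}·x for d ≥ 2. Then for every d ≥ 0 and every (t₀,…,t_{d−1}) ∈ (ℝ_{≥0})^d, the polynomial Φ_d(t₀,…,t_{d−1}) is monic of degree d and copositive. -/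
open Polynomial

noncomputable def Phi : (d : ℕ) → (Fin d → ℝ) → ℝ[X]
  | 0, _ => 1
  | 1, t => X + C (t 0)
  | d + 2, t =>
      (X - C (t ⟨d, by omega⟩)) ^ 2 * Phi d (fun i => t ⟨i.1, by omega⟩)
        + C (t ⟨d + 1, by omega⟩) * X

theorem Phi_monic_copositive (d : ℕ) (t : Fin d → ℝ) (ht : ∀ i, 0 ≤ t i) :
    (Phi d t).Monic ∧ (Phi d t).natDegree = d ∧
    (∀ x : ℝ, 0 ≤ x → 0 ≤ (Phi d t).eval x) := by
  induction d using Nat.strong_induction_on with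
  | _ d ih =>
    match d, t, ht with
    | 0, t, ht =>
      refine ⟨monic_one, by simp [Phi], fun x hx => by simp [Phi]⟩
    | 1, t, ht =>
      refine ⟨monic_X_add_C _, by simp [Phi], fun x hx => ?_⟩
      simp only [Phi, eval_add, eval_X, eval_C]
      have := ht 0
      linarith
    | d + 2, t, ht =>
      obtain ⟨hm, hdeg, hpos⟩ := ih d (by omega) (fun i => t ⟨i.1, by omega⟩)
        (fun i => ht _)
      set a := t ⟨d, by omega⟩
      set b := t ⟨d + 1, by omega⟩
      set P := Phi d (fun i => t ⟨i.1, by omega⟩) with hP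
      have hM : ((X - C a) ^ 2 * P).Monic := ((monic_X_sub_C a).pow 2).mul hm
      have hMdeg : ((X - C a) ^ 2 * P).natDegree = d + 2 := by
        rw [natDegree_mul (((monic_X_sub_C a).pow 2).ne_zero) hm.ne_zero,
          natDegree_pow, natDegree_X_sub_C, hdeg]
        ring
      have hlt : (C b * X).degree < ((X - C a) ^ 2 * P).degree := by
        apply lt_of_le_of_lt (degree_C_mul_X_le _)
        rw [degree_eq_natDegree hM.ne_zero, hMdeg]
        exact_mod_cast by omega
      simp only [Phi]
      refine ⟨hM.add_of_left hlt, ?_, fun x hx => ?_⟩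
      · rw [natDegree_eq_of_degree_eq (degree_add_eq_left_of_degree_lt hlt), hMdeg]
      · simp only [eval_add, eval_mul, eval_pow, eval_sub, eval_X, eval_C]
        have h1 := hpos x hx
        have h2 : 0 ≤ b := ht _
        nlinarith [sq_nonneg (x - a)]
end

section
/- Define Φ_d : (ℝ_{≥0})^d → ℝ[x] recursively by Φ₀ = 1, Φ₁(t₀) = x + t₀, and Φ_d(t₀,…,t_{d−1}) = (x − t_{d−2})²·Φ_{d−2}(t₀,…,t_{d−3}) + t_{d−1}·x for d ≥ 2. Then Φ_d is surjective onto C_d: every monic copositive polynomial of degree d equals Φ_d(t₀,…,t_{d−1}) for some t₀,…,t_{d−1} ≥ 0. -/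
/-!
For `f ∈ C_{d+2}` let `t = inf_{x>0} f(x)/x ≥ 0`. Then `f - t X` is still copositive and
touches zero at some `s ≥ 0`: a minimiser of `f(x)/x` on `(0, ∞)` if `f(0) > 0`, of `f/X`
on `[0, ∞)` if `f(0) = 0`. A positive touching point is a local minimum of `f - t X`, hence a
double root; for `s = 0` the double root comes from `f - t X = X (f/X - t)`. So
`f = (X - s)² q + t X` with `q ∈ C_d`, and induction on `d` finishes.
-/

open Polynomial

open Filter Topology Set

theorem exists_isMinOn_Ici_of_tendsto_atTop_s12 {φ : ℝ → ℝ} {a : ℝ} (hφ : ContinuousOn φ (Ici a))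
    (hlim : Tendsto φ atTop atTop) : ∃ s ∈ Ici a, IsMinOn φ (Ici a) s := by
  obtain ⟨b, hb⟩ := (hlim.eventually_ge_atTop (φ a)).exists_forall_of_atTop
  obtain ⟨s, hs, hmin⟩ := isCompact_Icc.exists_isMinOn (nonempty_Icc.2 (le_max_left a b))
    (hφ.mono Icc_subset_Ici_self)
  refine ⟨s, hs.1, fun x hx => ?_⟩
  rcases le_total x (max a b) with hxb | hxb
  · exact hmin ⟨hx, hxb⟩
  · exact (hmin ⟨le_rfl, le_max_left a b⟩).trans (hb x (le_of_max_le_right hxb))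

theorem exists_isMinOn_Ioi_of_tendsto_atTop_s12 {φ : ℝ → ℝ} {a : ℝ} (hφ : ContinuousOn φ (Ioi a))
    (hlim₀ : Tendsto φ (𝓝[>] a) atTop) (hlim : Tendsto φ atTop atTop) :
    ∃ s ∈ Ioi a, IsMinOn φ (Ioi a) s := by
  obtain ⟨ε, hε, hφε⟩ :=
    mem_nhdsGT_iff_exists_Ioo_subset.1 (hlim₀.eventually_ge_atTop (φ (a + 1)))
  obtain ⟨c, hac, hcε⟩ := exists_between (lt_min hε (lt_add_one a))
  obtain ⟨s, hs, hmin⟩ :=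
    exists_isMinOn_Ici_of_tendsto_atTop_s12 (hφ.mono (Ici_subset_Ioi.2 hac)) hlim
  refine ⟨s, hac.trans_le hs, fun x (hx : a < x) => ?_⟩
  rcases le_total c x with hcx | hxc
  · exact hmin hcx
  · have hx₀ : φ (a + 1) ≤ φ x := hφε ⟨hx, hxc.trans_lt (hcε.trans_le (min_le_left _ _))⟩
    exact (hmin (hcε.le.trans (min_le_right _ _))).trans hx₀

theorem sq_X_sub_C_dvd_of_isLocalMin {p : ℝ[X]} {s : ℝ} (hmin : IsLocalMin (fun x => p.eval x) s)
    (hroot : p.eval s = 0) : (X - C s) ^ 2 ∣ p := by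
  obtain ⟨q, rfl⟩ := dvd_iff_isRoot.2 hroot
  have hq : q.eval s = 0 := by
    have hderiv := hmin.deriv_eq_zero
    rw [Polynomial.deriv] at hderiv
    simpa [derivative_mul] using hderiv
  obtain ⟨r, rfl⟩ := dvd_iff_isRoot.2 hq
  exact ⟨r, by ring⟩

def Copositive (p : ℝ[X]) : Prop := ∀ x : ℝ, 0 ≤ x → 0 ≤ p.eval x

theorem copositive_X : Copositive X := fun x hx => by simpa using hx

namespace Copositive

variable {f p q r : ℝ[X]} {s : ℝ}

theorem mul (hp : Copositive p) (hq : Copositive q) : Copositive (p * q) := fun x hx => by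
  rw [eval_mul]
  exact mul_nonneg (hp x hx) (hq x hx)

theorem of_forall_ne (h : ∀ x, 0 ≤ x → x ≠ s → 0 ≤ p.eval x) : Copositive p := by
  intro x hx
  rcases eq_or_ne x s with rfl | hxs
  · have hcont : Tendsto (fun y => p.eval y) (𝓝[>] x) (𝓝 (p.eval x)) :=
      p.continuous.continuousAt.continuousWithinAt
    exact ge_of_tendsto hcont
      (eventually_nhdsWithin_of_forall fun y (hy : x < y) => h y (hx.trans hy.le) hy.ne')
  · exact h x hx hxs

theorem of_mul_left (hr : ∀ x, 0 ≤ x → x ≠ s → 0 < r.eval x) (h : Copositive (r * p)) :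
    Copositive p :=
  of_forall_ne fun x hx hxs => by
    have := h x hx
    rw [eval_mul] at this
    exact (mul_nonneg_iff_of_pos_left (hr x hx hxs)).1 this

theorem sq_X_sub_C_dvd (hp : Copositive p) (hs : 0 < s) (hroot : p.eval s = 0) :
    (X - C s) ^ 2 ∣ p := by
  refine sq_X_sub_C_dvd_of_isLocalMin ?_ hroot
  filter_upwards [Ioi_mem_nhds hs] with x hx
  rw [hroot]
  exact hp x (le_of_lt hx)

theorem sq_X_sub_C_dvd_X_mul (hp : Copositive p) (hs : 0 ≤ s) (hroot : p.eval s = 0) :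
    (X - C s) ^ 2 ∣ X * p := by
  rcases hs.eq_or_lt with rfl | hs
  · obtain ⟨q, rfl⟩ := dvd_iff_isRoot.2 hroot
    exact ⟨q, by rw [map_zero, sub_zero]; ring⟩
  · exact dvd_mul_of_dvd_right (hp.sq_X_sub_C_dvd hs hroot) _

theorem exists_sq_dvd_sub_C_mul_X_of_eval_zero_eq_zero (hc : Copositive f) (hm : f.Monic)
    (hd : 2 ≤ f.natDegree) (h0 : f.eval 0 = 0) :
    ∃ s t : ℝ, 0 ≤ s ∧ 0 ≤ t ∧ Copositive (f - C t * X) ∧ (X - C s) ^ 2 ∣ f - C t * X := by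
  set g := f.divX
  have hfg : f = X * g := by
    simpa [coeff_zero_eq_eval_zero, h0] using f.X_mul_divX_add.symm
  have hgc : Copositive g :=
    of_mul_left (s := 0) (fun x hx hx0 => by simpa using lt_of_le_of_ne hx hx0.symm) (hfg ▸ hc)
  have hgm : g.Monic := monic_X.of_mul_monic_left (hfg ▸ hm)
  have hgdeg : 0 < g.degree := by
    rw [degree_eq_natDegree hgm.ne_zero, natDegree_divX_eq_natDegree_tsub_one]
    exact_mod_cast (by omega : 0 < f.natDegree - 1)
  obtain ⟨s, hs, hmin⟩ := exists_isMinOn_Ici_of_tendsto_atTop_s12 g.continuous.continuousOn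
    (g.tendsto_atTop_of_leadingCoeff_nonneg hgdeg (by rw [hgm.leadingCoeff]; exact zero_le_one))
  have hgt : Copositive (g - C (g.eval s)) := fun x hx => by
    simpa using (hmin hx : g.eval s ≤ g.eval x)
  have heq : f - C (g.eval s) * X = X * (g - C (g.eval s)) := by
    rw [hfg]
    ring
  refine ⟨s, g.eval s, hs, hgc s hs, heq ▸ copositive_X.mul hgt, ?_⟩
  exact heq ▸ hgt.sq_X_sub_C_dvd_X_mul hs (by simp)

theorem exists_sq_dvd_sub_C_mul_X_of_eval_zero_pos (hc : Copositive f) (hm : f.Monic)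
    (hd : 2 ≤ f.natDegree) (h0 : 0 < f.eval 0) :
    ∃ s t : ℝ, 0 ≤ s ∧ 0 ≤ t ∧ Copositive (f - C t * X) ∧ (X - C s) ^ 2 ∣ f - C t * X := by
  have hlim₀ : Tendsto (fun x => f.eval x / x) (𝓝[>] 0) atTop := by
    simpa only [div_eq_mul_inv] using
      ((f.continuous.tendsto 0).mono_left nhdsWithin_le_nhds).pos_mul_atTop h0
        tendsto_inv_nhdsGT_zero
  have hlim : Tendsto (fun x => f.eval x / x) atTop atTop := by
    have hdeg : (X : ℝ[X]).degree < f.degree := by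
      rw [degree_X, degree_eq_natDegree hm.ne_zero]
      exact_mod_cast hd
    simpa using f.div_tendsto_atTop_of_degree_gt X hdeg X_ne_zero (by simp [hm.leadingCoeff])
  obtain ⟨s, hs : 0 < s, hmin⟩ := exists_isMinOn_Ioi_of_tendsto_atTop_s12
    (f.continuous.continuousOn.div continuousOn_id fun x hx => ne_of_gt hx) hlim₀ hlim
  set t := f.eval s / s
  have hh : Copositive (f - C t * X) := by
    intro x hx
    rcases hx.eq_or_lt with rfl | hx
    · simpa using hc 0 le_rfl
    · have htx : t ≤ f.eval x / x := hmin hx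
      rw [le_div_iff₀ hx] at htx
      simpa using htx
  have hroot : (f - C t * X).eval s = 0 := by
    simp [t, hs.ne']
  exact ⟨s, t, hs.le, div_nonneg (hc s hs.le) hs.le, hh, hh.sq_X_sub_C_dvd hs hroot⟩

theorem exists_sq_dvd_sub_C_mul_X (hc : Copositive f) (hm : f.Monic) (hd : 2 ≤ f.natDegree) :
    ∃ s t : ℝ, 0 ≤ s ∧ 0 ≤ t ∧ Copositive (f - C t * X) ∧ (X - C s) ^ 2 ∣ f - C t * X :=
  (hc 0 le_rfl).eq_or_lt.elim
    (fun h0 => hc.exists_sq_dvd_sub_C_mul_X_of_eval_zero_eq_zero hm hd h0.symm)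
    (hc.exists_sq_dvd_sub_C_mul_X_of_eval_zero_pos hm hd)

theorem exists_eq_sq_mul_add {d : ℕ} (hc : Copositive f) (hm : f.Monic)
    (hd : f.natDegree = d + 2) :
    ∃ s t : ℝ, ∃ q : ℝ[X], 0 ≤ s ∧ 0 ≤ t ∧ q.Monic ∧ q.natDegree = d ∧ Copositive q ∧
      f = (X - C s) ^ 2 * q + C t * X := by
  obtain ⟨s, t, hs, ht, hh, q, hq⟩ := hc.exists_sq_dvd_sub_C_mul_X hm (by omega)
  have hlt : (C t * X).natDegree < f.natDegree :=
    (natDegree_C_mul_le t X).trans_lt (by rw [natDegree_X, hd]; omega)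
  have hsq : ((X - C s) ^ 2).Monic := (monic_X_sub_C s).pow 2
  have hqm : q.Monic := hsq.of_mul_monic_left (hq ▸ hm.sub_of_left (degree_lt_degree hlt))
  refine ⟨s, t, q, hs, ht, hqm, ?_, ?_, eq_add_of_sub_eq hq⟩
  · have hdeg := congrArg natDegree hq
    rw [natDegree_sub_eq_left_of_natDegree_lt hlt, hsq.natDegree_mul hqm, natDegree_pow,
      natDegree_X_sub_C] at hdeg
    omega
  · refine of_mul_left (s := s) (fun x _ hxs => ?_) (hq ▸ hh)
    simpa using sq_pos_of_ne_zero (sub_ne_zero.2 hxs)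

end Copositive

theorem Phi_add_two_snoc (d : ℕ) (u : Fin d → ℝ) (s t : ℝ) :
    Phi (d + 2) (Fin.snoc (Fin.snoc u s) t) = (X - C s) ^ 2 * Phi d u + C t * X := by
  rw [Phi]
  simp [Fin.snoc]

theorem Phi_surjective (d : ℕ) (f : ℝ[X]) (hm : f.Monic) (hd : f.natDegree = d)
    (hc : ∀ x : ℝ, 0 ≤ x → 0 ≤ f.eval x) :
    ∃ t : Fin d → ℝ, (∀ i, 0 ≤ t i) ∧ f = Phi d t := by
  induction d using Nat.twoStepInduction generalizing f with
  | zero => exact ⟨Fin.elim0, fun i => i.elim0, hm.natDegree_eq_zero.1 hd⟩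
  | one =>
    exact ⟨fun _ => f.coeff 0, fun _ => f.coeff_zero_eq_eval_zero ▸ hc 0 le_rfl, hm.eq_X_add_C hd⟩
  | more d ih _ =>
    obtain ⟨s, t, q, hs, ht, hqm, hqd, hqc, rfl⟩ := Copositive.exists_eq_sq_mul_add hc hm hd
    obtain ⟨u, hu, rfl⟩ := ih q hqm hqd hqc
    refine ⟨Fin.snoc (Fin.snoc u s) t, fun i => ?_, (Phi_add_two_snoc d u s t).symm⟩
    induction i using Fin.lastCases with
    | last => simpa using ht
    | cast j =>
      induction j using Fin.lastCases with
      | last => simpa using hs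
      | cast k => simpa using hu k
end

section
/- Let d ≥ 2, and let f, g be monic copositive polynomials of degree d − 2, neither of which has a point y ≥ 0 where both the polynomial and its derivative vanish. If f(x)·(x − t)² = g(x)·(x − s)² for all x, where t, s ≥ 0, then f = g and t = s. -/
open Polynomial

theorem base_boundary_generically_injective (d : ℕ) (hd : 2 ≤ d) (f g : ℝ[X])
    (hfm : f.Monic) (hfd : f.natDegree = d - 2) (hfc : ∀ x : ℝ, 0 ≤ x → 0 ≤ f.eval x)
    (hgm : g.Monic) (hgd : g.natDegree = d - 2) (hgc : ∀ x : ℝ, 0 ≤ x → 0 ≤ g.eval x)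
    (hfnb : ¬ ∃ y : ℝ, 0 ≤ y ∧ f.eval y = 0 ∧ (Polynomial.derivative f).eval y = 0)
    (hgnb : ¬ ∃ y : ℝ, 0 ≤ y ∧ g.eval y = 0 ∧ (Polynomial.derivative g).eval y = 0)
    (t s : ℝ) (ht : 0 ≤ t) (hs : 0 ≤ s)
    (heq : f * (X - C t) ^ 2 = g * (X - C s) ^ 2) :
    f = g ∧ t = s := by
  have hts : t = s := by
    by_contra hne
    have hts2 : (t - s) ^ 2 ≠ 0 := pow_ne_zero _ (sub_ne_zero.mpr hne)
    have h0 := congrArg (Polynomial.eval t) heq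
    simp only [eval_mul, eval_pow, eval_sub, eval_X, eval_C, sub_self] at h0
    have hg0 : g.eval t = 0 := by
      have : g.eval t * (t - s) ^ 2 = 0 := by
        rw [← h0]; ring
      exact (mul_eq_zero.mp this).resolve_right hts2
    have h1 := congrArg (Polynomial.eval t) (congrArg Polynomial.derivative heq)
    simp only [derivative_mul, derivative_pow, derivative_sub, derivative_X,
      derivative_C, sub_zero, mul_one, eval_add, eval_mul, eval_pow, eval_sub,
      eval_X, eval_C, sub_self, hg0] at h1
    have hg1 : (Polynomial.derivative g).eval t = 0 := by
      norm_num at h1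
      exact h1.resolve_right (sub_ne_zero.mpr hne)
    exact hgnb ⟨t, ht, hg0, hg1⟩
  subst hts
  refine ⟨mul_right_cancel₀ (pow_ne_zero 2 (X_sub_C_ne_zero t)) heq, rfl⟩
end

section
/- Let g be a monic copositive polynomial of degree d ≥ 2 and let t = inf { g(x)/x : x > 0 }. If this infimum is not attained at any x > 0, then t = lim_{x→0⁺} g(x)/x (the limit exists in ℝ), and in particular g(0) = 0. -/
open Polynomial Filter Set

private lemma tail_bound (d : ℕ) (hd : 2 ≤ d) (g : ℝ[X]) (hm : g.Monic)
    (hdeg : g.natDegree = d) (c : ℝ) :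
    ∃ M : ℝ, 0 < M ∧ ∀ x : ℝ, M ≤ x → c ≤ g.eval x / x := by
  set p : ℝ[X] := g - C c * X with hp
  have hdegCX : (C c * X).degree < g.degree := by
    have h1 : (C c * X).degree ≤ 1 := by
      calc (C c * X).degree ≤ (C c).degree + X.degree := degree_mul_le _ _
        _ ≤ 0 + 1 := add_le_add degree_C_le degree_X_le
        _ = 1 := by simp
    have h2 : (1 : WithBot ℕ) < g.degree := by
      rw [degree_eq_natDegree hm.ne_zero, hdeg]
      exact_mod_cast lt_of_lt_of_le one_lt_two hd
    exact lt_of_le_of_lt h1 h2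
  have hplead : p.leadingCoeff = 1 := by
    rw [hp, leadingCoeff_sub_of_degree_lt hdegCX]
    exact hm
  have hpdeg : 0 < p.degree := by
    have : p.degree = g.degree := by
      rw [hp]; exact degree_sub_eq_left_of_degree_lt hdegCX
    rw [this, degree_eq_natDegree hm.ne_zero, hdeg]
    exact_mod_cast lt_of_lt_of_le two_pos hd
  have htop : Tendsto (fun x => p.eval x) atTop atTop :=
    p.tendsto_atTop_of_leadingCoeff_nonneg hpdeg (by rw [hplead]; norm_num)
  have hev : ∀ᶠ x in atTop, (0 : ℝ) ≤ p.eval x := htop.eventually_ge_atTop 0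
  obtain ⟨M, hM⟩ := (hev.and (eventually_ge_atTop (1 : ℝ))).exists_forall_of_atTop
  refine ⟨max M 1, by positivity, fun x hx => ?_⟩
  have hxM : M ≤ x := le_trans (le_max_left _ _) hx
  have hx1 : (1 : ℝ) ≤ x := le_trans (le_max_right _ _) hx
  have hx0 : 0 < x := lt_of_lt_of_le one_pos hx1
  have := (hM x hxM).1
  rw [hp] at this
  simp only [eval_sub, eval_mul, eval_C, eval_X, sub_nonneg] at this
  rw [le_div_iff₀ hx0]
  linarith

theorem inf_not_attained_limit (d : ℕ) (hd : 2 ≤ d) (g : ℝ[X])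
    (hm : g.Monic) (hdeg : g.natDegree = d)
    (hc : ∀ x : ℝ, 0 ≤ x → 0 ≤ g.eval x)
    (t : ℝ) (hT : t = sInf {y : ℝ | ∃ x : ℝ, 0 < x ∧ y = g.eval x / x})
    (hna : ¬ ∃ x : ℝ, 0 < x ∧ g.eval x / x = t) :
    Tendsto (fun x : ℝ => g.eval x / x) (nhdsWithin 0 (Ioi 0)) (nhds t) ∧ g.eval 0 = 0 := by
  set S : Set ℝ := {y : ℝ | ∃ x : ℝ, 0 < x ∧ y = g.eval x / x} with hS
  have hSne : S.Nonempty := ⟨g.eval 1 / 1, 1, one_pos, rfl⟩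
  have hSbdd : BddBelow S := by
    refine ⟨0, fun y hy => ?_⟩
    obtain ⟨x, hx, rfl⟩ := hy
    exact div_nonneg (hc x hx.le) hx.le
  have hlow : ∀ x : ℝ, 0 < x → t ≤ g.eval x / x := fun x hx => by
    rw [hT]; exact csInf_le hSbdd ⟨x, hx, rfl⟩
  -- Step A : g.eval 0 = 0
  have h0 : g.eval 0 = 0 := by
    by_contra h0
    have hg0 : 0 < g.eval 0 := lt_of_le_of_ne (hc 0 le_rfl) (Ne.symm h0)
    -- near 0, g.eval x / x → ∞
    have hnear : Tendsto (fun x : ℝ => g.eval x / x) (nhdsWithin 0 (Ioi 0)) atTop := by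
      have h1 : Tendsto (fun x : ℝ => g.eval x) (nhdsWithin 0 (Ioi 0)) (nhds (g.eval 0)) :=
        (g.continuous_aeval.tendsto 0).mono_left nhdsWithin_le_nhds
      have h2 : Tendsto (fun x : ℝ => x⁻¹) (nhdsWithin 0 (Ioi 0)) atTop :=
        tendsto_inv_nhdsGT_zero
      simpa [div_eq_mul_inv] using Tendsto.pos_mul_atTop hg0 h1 h2
    have hev : ∀ᶠ x in nhdsWithin (0:ℝ) (Ioi 0), t + 1 ≤ g.eval x / x :=
      hnear.eventually_ge_atTop (t + 1)
    obtain ⟨ε, hε, hεsub⟩ := mem_nhdsGT_iff_exists_Ioo_subset.mp hev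
    obtain ⟨M, hM0, hM⟩ := tail_bound d hd g hm hdeg (t + 1)
    -- there is a point with value < t + 1
    have hlt : ∃ y ∈ S, y < t + 1 := by
      apply exists_lt_of_csInf_lt hSne
      rw [← hT]; linarith
    obtain ⟨y, ⟨x1, hx1, rfl⟩, hy⟩ := hlt
    have hx1ε : ε ≤ x1 := by
      by_contra hcon
      exact absurd (hεsub ⟨hx1, lt_of_not_ge hcon⟩) (by simpa using not_le.mpr hy)
    have hx1M : x1 ≤ M := by
      by_contra hcon
      exact absurd (hM x1 (le_of_lt (lt_of_not_ge hcon))) (not_le.mpr hy)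
    have hεpos : (0:ℝ) < ε := hε
    -- min on [ε, M]
    have hcont : ContinuousOn (fun x : ℝ => g.eval x / x) (Icc ε M) := by
      apply ContinuousOn.div g.continuous_aeval.continuousOn continuousOn_id
      intro x hx
      exact ne_of_gt (lt_of_lt_of_le hεpos hx.1)
    obtain ⟨x0, hx0mem, hx0min⟩ :=
      (isCompact_Icc).exists_isMinOn ⟨x1, hx1ε, hx1M⟩ hcont
    have hx0pos : 0 < x0 := lt_of_lt_of_le hεpos hx0mem.1
    have hx0lt : g.eval x0 / x0 < t + 1 := lt_of_le_of_lt (hx0min ⟨hx1ε, hx1M⟩) hy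
    have hlb : ∀ y ∈ S, g.eval x0 / x0 ≤ y := by
      rintro y ⟨x, hx, rfl⟩
      rcases le_or_gt ε x with hxε | hxε
      · rcases le_or_gt x M with hxM | hxM
        · exact hx0min ⟨hxε, hxM⟩
        · linarith [hM x hxM.le]
      · have h3 : t + 1 ≤ g.eval x / x := hεsub ⟨hx, hxε⟩
        linarith
    have h1 : g.eval x0 / x0 ≤ t := by rw [hT]; exact le_csInf hSne hlb
    have h2 : t ≤ g.eval x0 / x0 := hlow x0 hx0pos
    exact hna ⟨x0, hx0pos, le_antisymm h1 h2⟩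
  -- Step B : g = X * h
  have hXdvd : X ∣ g := X_dvd_iff.mpr (by rwa [coeff_zero_eq_eval_zero])
  obtain ⟨h, hgh⟩ := hXdvd
  have hfh : ∀ x : ℝ, x ≠ 0 → g.eval x / x = h.eval x := by
    intro x hx
    rw [hgh, eval_mul, eval_X, mul_div_cancel_left₀ _ hx]
  have hhcont : Tendsto (fun x : ℝ => h.eval x) (nhdsWithin 0 (Ioi 0)) (nhds (h.eval 0)) :=
    (h.continuous_aeval.tendsto 0).mono_left nhdsWithin_le_nhds
  have hth : t = h.eval 0 := by
    have hle : t ≤ h.eval 0 := by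
      refine ge_of_tendsto hhcont ?_
      filter_upwards [self_mem_nhdsWithin] with x hx
      rw [← hfh x (ne_of_gt hx)]
      exact hlow x hx
    rcases eq_or_lt_of_le hle with heq | hlt
    · exact heq
    · exfalso
      obtain ⟨M, hM0, hM⟩ := tail_bound d hd g hm hdeg (h.eval 0)
      have hcont : ContinuousOn (fun x : ℝ => h.eval x) (Icc 0 M) :=
        h.continuous_aeval.continuousOn
      obtain ⟨x0, hx0mem, hx0min⟩ :=
        (isCompact_Icc).exists_isMinOn ⟨0, le_rfl, hM0.le⟩ hcont
      have hlb : ∀ y ∈ S, h.eval x0 ≤ y := by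
        rintro y ⟨x, hx, rfl⟩
        rcases le_or_gt x M with hxM | hxM
        · rw [hfh x (ne_of_gt hx)]
          exact hx0min ⟨hx.le, hxM⟩
        · calc h.eval x0 ≤ h.eval 0 := hx0min ⟨le_rfl, hM0.le⟩
            _ ≤ g.eval x / x := hM x hxM.le
      have h1 : h.eval x0 ≤ t := by rw [hT]; exact le_csInf hSne hlb
      have hx0pos : 0 < x0 := by
        rcases eq_or_lt_of_le hx0mem.1 with heq | hpos
        · exfalso; rw [← heq] at h1; linarith
        · exact hpos
      have h2 : t ≤ h.eval x0 := by
        rw [← hfh x0 (ne_of_gt hx0pos)]; exact hlow x0 hx0pos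
      exact hna ⟨x0, hx0pos, by rw [hfh x0 (ne_of_gt hx0pos)]; exact le_antisymm h1 h2⟩
  refine ⟨?_, h0⟩
  have : Tendsto (fun x : ℝ => h.eval x) (nhdsWithin 0 (Ioi 0)) (nhds t) := by
    rwa [hth]
  refine this.congr' ?_
  filter_upwards [self_mem_nhdsWithin] with x hx
  exact (hfh x (ne_of_gt hx)).symm
end

section
/- For monic copositive polynomials f₁, f₂ of degree d each having a point y ≥ 0 with fᵢ(y) = fᵢ'(y) = 0, and t₁ > t₂ ≥ 0, the polynomials f₁ + t₁x and f₂ + t₂x are distinct: there is no pair with f₁ + t₁x = f₂ + t₂x unless (f₁,t₁) = (f₂,t₂). Concretely: if f₁(x) + t₁x = f₂(x) + t₂x for all x with t₁ > t₂, then f₂(0) = 0 and f₁'(0) = −(t₁ − t₂) < 0, contradicting copositivity of f₁. -/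
open Polynomial

theorem extension_distinct (d : ℕ) (f1 f2 : ℝ[X])
    (h1m : f1.Monic) (h1d : f1.natDegree = d) (h1c : ∀ x : ℝ, 0 ≤ x → 0 ≤ f1.eval x)
    (h2m : f2.Monic) (h2d : f2.natDegree = d) (h2c : ∀ x : ℝ, 0 ≤ x → 0 ≤ f2.eval x)
    (h1b : ∃ y : ℝ, 0 ≤ y ∧ f1.eval y = 0 ∧ (Polynomial.derivative f1).eval y = 0)
    (h2b : ∃ y : ℝ, 0 ≤ y ∧ f2.eval y = 0 ∧ (Polynomial.derivative f2).eval y = 0)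
    (t1 t2 : ℝ) (ht2 : 0 ≤ t2) (ht : t2 < t1)
    (heq : f1 + C t1 * X = f2 + C t2 * X) : False := by
  obtain ⟨y, hy0, hfy, hdy⟩ := h2b
  have heval : ∀ x : ℝ, f1.eval x + t1 * x = f2.eval x + t2 * x := by
    intro x
    have := congrArg (Polynomial.eval x) heq
    simpa using this
  -- y must be 0
  have hf1y : f1.eval y = (t2 - t1) * y := by
    have := heval y
    rw [hfy] at this; linarith
  have hy : y = 0 := by
    by_contra h
    have hypos : 0 < y := lt_of_le_of_ne hy0 (Ne.symm h)
    have h1 : 0 ≤ f1.eval y := h1c y hy0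
    nlinarith [hf1y]
  subst hy
  have hf10 : f1.eval 0 = 0 := by simpa using hf1y
  -- derivative of f1 at 0 is t2 - t1 < 0
  have hder : (Polynomial.derivative f1).eval 0 = t2 - t1 := by
    have := congrArg (fun p => (Polynomial.derivative p).eval 0) heq
    simp only [derivative_add, derivative_C_mul, derivative_X, eval_add, eval_mul, eval_C,
      eval_one, mul_one] at this
    rw [hdy] at this; linarith
  -- contradiction: slope of f1 at 0 from the right is nonneg
  have hD : HasDerivAt (fun x : ℝ => f1.eval x) ((Polynomial.derivative f1).eval 0) 0 :=
    f1.hasDerivAt 0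
  have hDW : HasDerivWithinAt (fun x : ℝ => f1.eval x) ((Polynomial.derivative f1).eval 0)
      (Set.Ioi 0) 0 := hD.hasDerivWithinAt
  have htend := hasDerivWithinAt_iff_tendsto_slope.mp hDW
  have hsub : (Set.Ioi (0:ℝ)) \ {0} = Set.Ioi 0 := by
    ext x; simp (config := {contextual := true}) [lt_irrefl, ne_of_gt]
  rw [hsub] at htend
  have hnn : ∀ᶠ x in nhdsWithin (0:ℝ) (Set.Ioi 0),
      0 ≤ slope (fun x : ℝ => f1.eval x) 0 x := by
    filter_upwards [self_mem_nhdsWithin] with x hx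
    have hx' : (0:ℝ) < x := hx
    have := h1c x hx'.le
    rw [slope_def_field]
    simp only [hf10, sub_zero]
    positivity
  have : 0 ≤ (Polynomial.derivative f1).eval 0 :=
    ge_of_tendsto htend hnn
  rw [hder] at this
  linarith
end
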